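/- arXiv:2006.05752 — 3 statements merged into one kernel-verified Lean document; each statement's English description precedes it below -/
import Mathlib

section
/- Let T₁, …, Tₙ be (possibly dependent) real random variables each with mean μ and variance σ². Then E[max_i Tᵢ] ≤ μ + σ·√(n−1). -/
open MeasureTheory

lemma det_bound {n : ℕ} (hn : 1 ≤ n) (hne : (Finset.univ : Finset (Fin n)).Nonempty)
    (y : Fin n → ℝ) (μ : ℝ) :
    Finset.univ.sup' hne y ≤ (∑ i, y i) / n + Real.sqrt ((n - 1) / n * ∑ i, (y i - μ) ^ 2) := by
  have hn0 : (0:ℝ) < n := by exact_mod_cast hn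
  obtain ⟨j, -, hj⟩ := Finset.exists_mem_eq_sup' hne y
  set ybar : ℝ := (∑ i, y i) / n with hybar
  have hsum : ∑ i, y i = n * ybar := by rw [hybar]; field_simp [hn0.ne']
  set S : ℝ := ∑ i, (y i - ybar) ^ 2 with hSdef
  have hS0 : 0 ≤ S := Finset.sum_nonneg fun i _ => sq_nonneg _
  have hd0 : ∑ i, (y i - ybar) = 0 := by
    rw [Finset.sum_sub_distrib, Finset.sum_const, Finset.card_univ, Fintype.card_fin,
      nsmul_eq_mul, hsum]
    ring
  have hcard : ((Finset.univ.erase j).card : ℝ) = (n : ℝ) - 1 := by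
    rw [Finset.card_erase_of_mem (Finset.mem_univ j), Finset.card_univ, Fintype.card_fin]
    have : (1:ℕ) ≤ n := hn
    push_cast [Nat.cast_sub this]
    ring
  have hcs := sq_sum_le_card_mul_sum_sq (s := Finset.univ.erase j) (f := fun i => y i - ybar)
  rw [hcard] at hcs
  have herase : ∑ i ∈ Finset.univ.erase j, (y i - ybar) = -(y j - ybar) := by
    have h := Finset.add_sum_erase Finset.univ (fun i => y i - ybar) (Finset.mem_univ j)
    rw [hd0] at h
    have h' : (y j - ybar) + ∑ i ∈ Finset.univ.erase j, (y i - ybar) = 0 := h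
    linarith
  have herase2 : ∑ i ∈ Finset.univ.erase j, (y i - ybar) ^ 2 = S - (y j - ybar) ^ 2 := by
    have h := Finset.add_sum_erase Finset.univ (fun i => (y i - ybar) ^ 2) (Finset.mem_univ j)
    rw [← hSdef] at h
    have h' : (y j - ybar) ^ 2 + ∑ i ∈ Finset.univ.erase j, (y i - ybar) ^ 2 = S := h
    linarith
  rw [herase, herase2, neg_sq] at hcs
  have key2 : (y j - ybar) ^ 2 ≤ (n - 1) / n * S := by
    rw [div_mul_eq_mul_div, le_div_iff₀ hn0]
    nlinarith
  have hjy : y j ≤ ybar + Real.sqrt ((n - 1) / n * S) := by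
    have h1 : y j - ybar ≤ Real.sqrt ((y j - ybar) ^ 2) := by
      rw [Real.sqrt_sq_eq_abs]; exact le_abs_self _
    have h2 := Real.sqrt_le_sqrt key2
    linarith
  have hSQ : S ≤ ∑ i, (y i - μ) ^ 2 := by
    have hexp : ∑ i, (y i - μ) ^ 2 = S + (n : ℝ) * (ybar - μ) ^ 2 := by
      have h1 : ∀ i ∈ (Finset.univ : Finset (Fin n)), (y i - μ) ^ 2
          = (y i - ybar) ^ 2 + (2 * (ybar - μ) * y i + (μ ^ 2 - ybar ^ 2)) := fun i _ => by ring
      rw [Finset.sum_congr rfl h1, Finset.sum_add_distrib, Finset.sum_add_distrib,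
        ← Finset.mul_sum, Finset.sum_const, Finset.card_univ, Fintype.card_fin,
        nsmul_eq_mul, hsum]
      ring
    nlinarith [sq_nonneg (ybar - μ), hn0]
  have hmono : Real.sqrt ((n - 1) / n * S) ≤ Real.sqrt ((n - 1) / n * ∑ i, (y i - μ) ^ 2) := by
    apply Real.sqrt_le_sqrt
    apply mul_le_mul_of_nonneg_left hSQ
    apply div_nonneg _ hn0.le
    linarith
  rw [hj]
  calc y j ≤ ybar + Real.sqrt ((n - 1) / n * S) := hjy
    _ ≤ _ := by linarith

lemma integrable_sup'_aux {Ω : Type*} [MeasurableSpace Ω] (P : Measure Ω)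
    {ι : Type*} {s : Finset ι} (hs : s.Nonempty) (T : ι → Ω → ℝ)
    (hInt : ∀ i, Integrable (T i) P) :
    Integrable (fun ω => s.sup' hs (fun i => T i ω)) P := by
  classical
  induction hs using Finset.Nonempty.cons_induction with
  | singleton a => simpa using hInt a
  | cons a s ha hs ih =>
    have heq : (fun ω => (Finset.cons a s ha).sup' (Finset.cons_nonempty ha) (fun i => T i ω))
        = fun ω => (T a ω) ⊔ (s.sup' hs (fun i => T i ω)) := by
      funext ω; rw [Finset.sup'_cons]
    rw [heq]
    exact (hInt a).sup ih

lemma integral_sqrt_le_sqrt_integral {Ω : Type*} [MeasurableSpace Ω] (P : Measure Ω)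
    [IsProbabilityMeasure P] (Z : Ω → ℝ) (hZ : Integrable Z P) (hZ0 : ∀ ω, 0 ≤ Z ω)
    (hs : Integrable (fun ω => Real.sqrt (Z ω)) P) :
    ∫ ω, Real.sqrt (Z ω) ∂P ≤ Real.sqrt (∫ ω, Z ω ∂P) := by
  set a := ∫ ω, Z ω ∂P with ha
  have ha0 : 0 ≤ a := integral_nonneg hZ0
  rcases eq_or_lt_of_le ha0 with h0 | hpos
  · have hz : Z =ᵐ[P] 0 := (integral_eq_zero_iff_of_nonneg hZ0 hZ).1 h0.symm
    have : ∫ ω, Real.sqrt (Z ω) ∂P = 0 := by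
      rw [integral_eq_zero_iff_of_nonneg (fun ω => Real.sqrt_nonneg _) hs]
      filter_upwards [hz] with ω hω
      simp [hω]
    rw [this]
    exact Real.sqrt_nonneg _
  · have hsa : 0 < Real.sqrt a := Real.sqrt_pos.2 hpos
    have key : ∀ ω, Real.sqrt (Z ω) ≤ (Z ω + a) / (2 * Real.sqrt a) := by
      intro ω
      rw [le_div_iff₀ (by positivity)]
      nlinarith [sq_nonneg (Real.sqrt (Z ω) - Real.sqrt a), Real.sq_sqrt (hZ0 ω),
        Real.sq_sqrt ha0, Real.sqrt_nonneg (Z ω), Real.sqrt_nonneg a]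
    have hInt2 : Integrable (fun ω => (Z ω + a) / (2 * Real.sqrt a)) P :=
      (hZ.add (integrable_const a)).div_const _
    calc ∫ ω, Real.sqrt (Z ω) ∂P ≤ ∫ ω, (Z ω + a) / (2 * Real.sqrt a) ∂P :=
          integral_mono hs hInt2 key
      _ = (a + a) / (2 * Real.sqrt a) := by
          rw [integral_div, integral_add hZ (integrable_const a), integral_const]
          simp [← ha]
      _ = Real.sqrt a := by
          rw [div_eq_iff (by positivity)]
          nlinarith [Real.sq_sqrt ha0]

theorem stmt_4 {Ω : Type*} [MeasurableSpace Ω] (P : Measure Ω) [IsProbabilityMeasure P]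
    (n : ℕ) (hn : 1 ≤ n) (T : Fin n → Ω → ℝ) (μ σ : ℝ) (hσ : 0 ≤ σ)
    (hInt : ∀ i, Integrable (T i) P)
    (hInt2 : ∀ i, Integrable (fun ω => (T i ω - μ) ^ 2) P)
    (hmean : ∀ i, ∫ ω, T i ω ∂P = μ)
    (hvar : ∀ i, ∫ ω, (T i ω - μ) ^ 2 ∂P = σ ^ 2)
    (hne : (Finset.univ : Finset (Fin n)).Nonempty) :
    ∫ ω, Finset.univ.sup' hne (fun i => T i ω) ∂P ≤ μ + σ * Real.sqrt (n - 1) := by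
  have hn0 : (0:ℝ) < n := by exact_mod_cast hn
  have hn1 : (1:ℝ) ≤ n := by exact_mod_cast hn
  set c : ℝ := ((n:ℝ) - 1) / n with hc
  have hc0 : 0 ≤ c := div_nonneg (by linarith) hn0.le
  set Q : Ω → ℝ := fun ω => ∑ i, (T i ω - μ) ^ 2 with hQ
  have hQ0 : ∀ ω, 0 ≤ Q ω := fun ω => Finset.sum_nonneg fun i _ => sq_nonneg _
  have hQint : Integrable Q P := integrable_finset_sum _ fun i _ => hInt2 i
  have hQval : ∫ ω, Q ω ∂P = n * σ ^ 2 := by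
    rw [hQ, integral_finset_sum _ fun i _ => hInt2 i]
    simp [hvar, Finset.sum_const, Finset.card_univ, nsmul_eq_mul]
  have hcQint : Integrable (fun ω => c * Q ω) P := hQint.const_mul c
  have hcQ0 : ∀ ω, 0 ≤ c * Q ω := fun ω => mul_nonneg hc0 (hQ0 ω)
  have hsqrtInt : Integrable (fun ω => Real.sqrt (c * Q ω)) P := by
    apply Integrable.mono' ((integrable_const (1:ℝ)).add hcQint)
    · exact Real.continuous_sqrt.comp_aestronglyMeasurable hcQint.aestronglyMeasurable
    · filter_upwards with ω
      simp only [Pi.add_apply]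
      rw [Real.norm_eq_abs, abs_of_nonneg (Real.sqrt_nonneg _)]
      nlinarith [Real.sq_sqrt (hcQ0 ω), Real.sqrt_nonneg (c * Q ω), hcQ0 ω]
  have hsumInt : Integrable (fun ω => (∑ i, T i ω) / n) P :=
    (integrable_finset_sum _ fun i _ => hInt i).div_const n
  have hgInt : Integrable (fun ω => (∑ i, T i ω) / n + Real.sqrt (c * Q ω)) P :=
    hsumInt.add hsqrtInt
  have hsupInt : Integrable (fun ω => Finset.univ.sup' hne (fun i => T i ω)) P :=
    integrable_sup'_aux P hne T hInt
  have h1 : ∫ ω, Finset.univ.sup' hne (fun i => T i ω) ∂P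
      ≤ ∫ ω, ((∑ i, T i ω) / n + Real.sqrt (c * Q ω)) ∂P := by
    apply integral_mono hsupInt hgInt
    intro ω
    exact det_bound hn hne (fun i => T i ω) μ
  have h2 : ∫ ω, ((∑ i, T i ω) / n + Real.sqrt (c * Q ω)) ∂P
      = μ + ∫ ω, Real.sqrt (c * Q ω) ∂P := by
    rw [integral_add hsumInt hsqrtInt]
    congr 1
    rw [integral_div, integral_finset_sum _ fun i _ => hInt i]
    simp only [hmean, Finset.sum_const, Finset.card_univ, Fintype.card_fin, nsmul_eq_mul]
    field_simp
  have h3 : ∫ ω, Real.sqrt (c * Q ω) ∂P ≤ σ * Real.sqrt ((n:ℝ) - 1) := by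
    have := integral_sqrt_le_sqrt_integral P (fun ω => c * Q ω) hcQint hcQ0 hsqrtInt
    have hval : ∫ ω, c * Q ω ∂P = ((n:ℝ) - 1) * σ ^ 2 := by
      rw [integral_const_mul, hQval, hc]
      field_simp
    rw [hval] at this
    calc ∫ ω, Real.sqrt (c * Q ω) ∂P ≤ Real.sqrt (((n:ℝ) - 1) * σ ^ 2) := this
      _ = σ * Real.sqrt ((n:ℝ) - 1) := by
          rw [Real.sqrt_mul (by linarith [hn1]), Real.sqrt_sq hσ, mul_comm]
  linarith
end

section
/- Let T₁,…,Tₙ be positive integrable random variables with E[Tᵢ] = μ for all i, and let T = (1 + n/b)·μ for b > 0. Then E[∑_{i=1}^n ⌊bT/(n·Tᵢ)⌋] ≥ b·T·μ^{−1} − n = b. -/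
open MeasureTheory

theorem stmt_7 {Ω : Type*} [MeasurableSpace Ω] (P : Measure Ω) [IsProbabilityMeasure P]
    (n : ℕ) (hn : 1 ≤ n) (b μ : ℝ) (hb : 0 < b) (hμ : 0 < μ)
    (T : ℝ) (hTdef : T = (1 + n / b) * μ)
    (Ti : Fin n → Ω → ℝ) (hpos : ∀ i ω, 0 < Ti i ω)
    (hInt : ∀ i, Integrable (Ti i) P)
    (hIntInv : ∀ i, Integrable (fun ω => 1 / Ti i ω) P)
    (hmean : ∀ i, ∫ ω, Ti i ω ∂P = μ)
    (hIntFloor : Integrable (fun ω => ∑ i, (⌊b * T / (n * Ti i ω)⌋ : ℝ)) P) :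
    b = b * T * μ⁻¹ - n ∧
      b * T * μ⁻¹ - n ≤ ∫ ω, ∑ i, (⌊b * T / (n * Ti i ω)⌋ : ℝ) ∂P := by
  have hn0 : (0:ℝ) < n := by exact_mod_cast hn
  have hT : 0 < T := by rw [hTdef]; positivity
  -- Jensen via tangent line: E[1/Ti] ≥ 1/μ
  have hinv : ∀ i : Fin n, (1:ℝ)/μ ≤ ∫ ω, 1 / Ti i ω ∂P := by
    intro i
    have htan : ∀ ω, 2/μ - Ti i ω/μ^2 ≤ 1 / Ti i ω := by
      intro ω
      have ht := hpos i ω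
      rw [div_sub_div _ _ (ne_of_gt hμ) (by positivity), div_le_div_iff₀ (by positivity) ht]
      nlinarith [sq_nonneg (Ti i ω - μ)]
    have hint2 : Integrable (fun ω => 2/μ - Ti i ω/μ^2) P := by
      exact (integrable_const _).sub ((hInt i).div_const _)
    have hmono := integral_mono hint2 (hIntInv i) htan
    have hcalc : ∫ ω, (2/μ - Ti i ω/μ^2) ∂P = 1/μ := by
      rw [integral_sub (integrable_const _) ((hInt i).div_const _), integral_div, integral_div,
        hmean i, integral_const]
      simp only [measure_univ, probReal_univ, ENNReal.toReal_one, one_smul]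
      field_simp
      ring
    linarith
  have heqf : ∀ i : Fin n, (fun ω => b*T/(n*Ti i ω) - 1)
      = fun ω => (b*T/n) * (1/Ti i ω) - 1 := by
    intro i; funext ω; rw [mul_one_div, div_div]
  have hinti : ∀ i : Fin n, Integrable (fun ω => b*T/(n*Ti i ω) - 1) P := by
    intro i
    rw [heqf i]
    exact ((hIntInv i).const_mul _).sub (integrable_const 1)
  constructor
  · rw [hTdef]; field_simp; ring
  · have hle : ∀ ω, ∑ i, (b*T/(n*Ti i ω) - 1) ≤ ∑ i, (⌊b*T/(n*Ti i ω)⌋ : ℝ) := by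
      intro ω
      refine Finset.sum_le_sum fun i _ => ?_
      have := Int.sub_one_lt_floor (b*T/(n*Ti i ω))
      linarith
    have hintg : Integrable (fun ω => ∑ i, (b*T/(n*Ti i ω) - 1)) P :=
      integrable_finset_sum _ fun i _ => hinti i
    have h1 := integral_mono hintg hIntFloor hle
    have h2 : b*T*μ⁻¹ - n ≤ ∫ ω, ∑ i, (b*T/(n*Ti i ω) - 1) ∂P := by
      rw [integral_finset_sum _ fun i _ => hinti i]
      have hterm : ∀ i : Fin n, (b*T/n) * (1/μ) - 1 ≤ ∫ ω, (b*T/(n*Ti i ω) - 1) ∂P := by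
        intro i
        rw [heqf i, integral_sub ((hIntInv i).const_mul _) (integrable_const 1),
          integral_const_mul, integral_const]
        simp only [measure_univ, probReal_univ, ENNReal.toReal_one, one_smul]
        have : 0 ≤ b*T/n := le_of_lt (by positivity)
        nlinarith [hinv i, mul_le_mul_of_nonneg_left (hinv i) this]
      calc b*T*μ⁻¹ - n = ∑ _i : Fin n, ((b*T/n) * (1/μ) - 1) := by
            rw [Finset.sum_const, Finset.card_univ, Fintype.card_fin, nsmul_eq_mul]
            field_simp
        _ ≤ _ := Finset.sum_le_sum fun i _ => hterm i
    linarith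
end

section
/- Let W ⊆ ℝᵈ be a nonempty closed convex set, h : ℝᵈ → ℝ be 1-strongly convex on W, β > 0, and z₁, z₂ ∈ ℝᵈ. Define wⱼ = argmin_{w∈W} (⟨w, zⱼ⟩ + β·h(w)) for j = 1,2. Then ‖w₁ − w₂‖ ≤ (1/β)·‖z₁ − z₂‖. -/
open scoped RealInnerProductSpace

theorem stmt_9 (d : ℕ) (W : Set (EuclideanSpace ℝ (Fin d)))
    (hWne : W.Nonempty) (hWclosed : IsClosed W) (hWconv : Convex ℝ W)
    (h : EuclideanSpace ℝ (Fin d) → ℝ) (hsc : StrongConvexOn W 1 h)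
    (β : ℝ) (hβ : 0 < β) (z₁ z₂ w₁ w₂ : EuclideanSpace ℝ (Fin d))
    (hw₁ : w₁ ∈ W) (hw₂ : w₂ ∈ W)
    (hmin₁ : ∀ w ∈ W, ⟪w₁, z₁⟫ + β * h w₁ ≤ ⟪w, z₁⟫ + β * h w)
    (hmin₂ : ∀ w ∈ W, ⟪w₂, z₂⟫ + β * h w₂ ≤ ⟪w, z₂⟫ + β * h w) :
    ‖w₁ - w₂‖ ≤ (1 / β) * ‖z₁ - z₂‖ := by
  -- growth inequality at a minimizer
  have key : ∀ (z w' : EuclideanSpace ℝ (Fin d)), w' ∈ W →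
      (∀ w ∈ W, ⟪w', z⟫ + β * h w' ≤ ⟪w, z⟫ + β * h w) →
      ∀ w ∈ W, β / 2 * ‖w - w'‖ ^ 2 ≤ (⟪w, z⟫ + β * h w) - (⟪w', z⟫ + β * h w') := by
    intro z w' hw' hmin w hw
    set c : ℝ := β / 2 * ‖w - w'‖ ^ 2 with hc
    set D : ℝ := (⟪w, z⟫ + β * h w) - (⟪w', z⟫ + β * h w') with hD
    have hstep : ∀ t ∈ Set.Ioo (0:ℝ) 1, (1 - t) * c ≤ D := by
      intro t ht
      obtain ⟨ht0, ht1⟩ := ht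
      have hmem : t • w + (1 - t) • w' ∈ W :=
        hWconv hw hw' ht0.le (by linarith) (by ring)
      have hconv := hsc.2 hw hw' ht0.le (by linarith : (0:ℝ) ≤ 1 - t) (by ring)
      have hinner : ⟪t • w + (1 - t) • w', z⟫ = t * ⟪w, z⟫ + (1 - t) * ⟪w', z⟫ := by
        rw [inner_add_left, real_inner_smul_left, real_inner_smul_left]
      have hlow := hmin _ hmem
      have hconv' : h (t • w + (1 - t) • w') ≤
          t * h w + (1 - t) * h w' - t * (1 - t) * (1 / 2 * ‖w - w'‖ ^ 2) := by
        simpa using hconv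
      have : ⟪w', z⟫ + β * h w' ≤ t * ⟪w, z⟫ + (1 - t) * ⟪w', z⟫ +
          β * (t * h w + (1 - t) * h w' - t * (1 - t) * (1 / 2 * ‖w - w'‖ ^ 2)) := by
        calc ⟪w', z⟫ + β * h w' ≤ ⟪t • w + (1 - t) • w', z⟫ + β * h (t • w + (1 - t) • w') :=
              hlow
          _ ≤ _ := by
              rw [hinner]
              have := mul_le_mul_of_nonneg_left hconv' hβ.le
              linarith
      have hβ' := hβ
      nlinarith [sq_nonneg (‖w - w'‖), mul_pos ht0 (by linarith : (0:ℝ) < 1 - t)]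
    have htend : Filter.Tendsto (fun t : ℝ => (1 - t) * c) (nhdsWithin 0 (Set.Ioi 0))
        (nhds c) := by
      have : Filter.Tendsto (fun t : ℝ => (1 - t) * c) (nhds 0) (nhds ((1 - 0) * c)) :=
        (((continuous_const.sub continuous_id).mul continuous_const).tendsto 0)
      simpa using this.mono_left nhdsWithin_le_nhds
    refine le_of_tendsto htend ?_
    filter_upwards [Ioo_mem_nhdsGT_of_mem (by simp : (0:ℝ) ∈ Set.Ico 0 1)] with t ht
    exact hstep t ht
  have k1 := key z₁ w₁ hw₁ hmin₁ w₂ hw₂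
  have k2 := key z₂ w₂ hw₂ hmin₂ w₁ hw₁
  have hnorm : ‖w₂ - w₁‖ = ‖w₁ - w₂‖ := norm_sub_rev _ _
  rw [hnorm] at k1
  have hsum : β * ‖w₁ - w₂‖ ^ 2 ≤ ⟪w₂ - w₁, z₁ - z₂⟫ := by
    have : ⟪w₂ - w₁, z₁ - z₂⟫ =
        (⟪w₂, z₁⟫ - ⟪w₁, z₁⟫) + (⟪w₁, z₂⟫ - ⟪w₂, z₂⟫) := by
      simp [inner_sub_left, inner_sub_right]; ring
    rw [this]
    linarith
  have hcs : ⟪w₂ - w₁, z₁ - z₂⟫ ≤ ‖w₁ - w₂‖ * ‖z₁ - z₂‖ := by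
    calc ⟪w₂ - w₁, z₁ - z₂⟫ ≤ ‖w₂ - w₁‖ * ‖z₁ - z₂‖ := real_inner_le_norm _ _
      _ = ‖w₁ - w₂‖ * ‖z₁ - z₂‖ := by rw [hnorm]
  rcases eq_or_lt_of_le (norm_nonneg (w₁ - w₂)) with hz | hz
  · rw [← hz]
    positivity
  · rw [div_mul_eq_mul_div, le_div_iff₀ hβ]
    nlinarith
  done
end
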